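/- arXiv:2410.12385 — 7 statements merged into one kernel-verified Lean document; each statement's English description precedes it below -/
import Mathlib

section
/- Let L be a finite list of real numbers, each lying in [0,1). Let v be the result of folding the binary operation (a, b) ↦ (a + b)/(1 + a·b) over L starting from 0, and let P = ∏_{a ∈ L} (1 + a)/(1 − a). Then v = (P − 1)/(P + 1). -/
private lemma aux4 (L : List ℝ) (hL : ∀ a ∈ L, 0 ≤ a ∧ a < 1) :
    ∀ x : ℝ, 0 ≤ x → x < 1 →
      L.foldl (fun a b => (a + b) / (1 + a * b)) x
        = ((1 + x) / (1 - x) * (L.map (fun a => (1 + a) / (1 - a))).prod - 1) /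
          ((1 + x) / (1 - x) * (L.map (fun a => (1 + a) / (1 - a))).prod + 1) := by
  induction L with
  | nil =>
      intro x hx0 hx1
      simp only [List.foldl_nil, List.map_nil, List.prod_nil, mul_one]
      have h1 : (1 : ℝ) - x > 0 := by linarith
      field_simp
      ring
  | cons a L ih =>
      intro x hx0 hx1
      obtain ⟨ha0, ha1⟩ := hL a (by simp)
      have hL' : ∀ b ∈ L, 0 ≤ b ∧ b < 1 := fun b hb => hL b (by simp [hb])
      have hden : (0:ℝ) < 1 + x * a := by nlinarith
      have hy0 : 0 ≤ (x + a) / (1 + x * a) := by positivity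
      have hy1 : (x + a) / (1 + x * a) < 1 := by
        rw [div_lt_one hden]; nlinarith
      simp only [List.foldl_cons, List.map_cons, List.prod_cons]
      rw [ih hL' _ hy0 hy1]
      have key : (1 + (x + a) / (1 + x * a)) / (1 - (x + a) / (1 + x * a))
          = (1 + x) / (1 - x) * ((1 + a) / (1 - a)) := by
        have h1 : (1:ℝ) - x > 0 := by linarith
        have h2 : (1:ℝ) - a > 0 := by linarith
        have hd : (0:ℝ) < 1 - (x + a) / (1 + x * a) := by linarith
        rw [div_mul_div_comm, div_eq_div_iff hd.ne' (by positivity : (0:ℝ) < (1-x)*(1-a)).ne']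
        field_simp
        ring
      rw [key, mul_assoc]

theorem stmt_4 (L : List ℝ) (hL : ∀ a ∈ L, 0 ≤ a ∧ a < 1) :
    L.foldl (fun a b => (a + b) / (1 + a * b)) 0
      = ((L.map (fun a => (1 + a) / (1 - a))).prod - 1) /
        ((L.map (fun a => (1 + a) / (1 - a))).prod + 1) := by
  have := aux4 L hL 0 le_rfl one_pos
  simpa using this
end

section
/- Let 0 < u < 1 and 0 < r₁ < r₂ be real numbers. Then g(r₁, u) < g(r₂, u), where g(r,u) := 2·log_{(1+r)u/(1+ru)} u and log_b x denotes the base-b logarithm (ln x)/(ln b). -/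
theorem stmt_6 (u r₁ r₂ : ℝ) (hu0 : 0 < u) (hu1 : u < 1) (hr1 : 0 < r₁) (hr : r₁ < r₂) :
    2 * Real.logb ((1 + r₁) * u / (1 + r₁ * u)) u
      < 2 * Real.logb ((1 + r₂) * u / (1 + r₂ * u)) u := by
  have hr2 : 0 < r₂ := hr1.trans hr
  have hd1 : 0 < 1 + r₁ * u := by positivity
  have hd2 : 0 < 1 + r₂ * u := by positivity
  set b₁ := (1 + r₁) * u / (1 + r₁ * u) with hb1def
  set b₂ := (1 + r₂) * u / (1 + r₂ * u) with hb2def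
  have hb1pos : 0 < b₁ := by positivity
  have hb2pos : 0 < b₂ := by positivity
  have hb12 : b₁ < b₂ := by
    rw [hb1def, hb2def, div_lt_div_iff₀ hd1 hd2]
    nlinarith [mul_pos hu0 (sub_pos.2 hu1), sub_pos.2 hr]
  have hb2lt1 : b₂ < 1 := by
    rw [hb2def, div_lt_one hd2]
    nlinarith
  have hlu : Real.log u < 0 := Real.log_neg hu0 hu1
  have hl12 : Real.log b₁ < Real.log b₂ := Real.log_lt_log hb1pos hb12
  have hl2 : Real.log b₂ < 0 := Real.log_neg hb2pos hb2lt1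
  have hl1 : Real.log b₁ < 0 := hl12.trans hl2
  have hinv : (Real.log b₂)⁻¹ < (Real.log b₁)⁻¹ := by
    apply inv_lt_inv_of_neg hl2 hl1 |>.mpr hl12
  have : Real.log u * (Real.log b₁)⁻¹ < Real.log u * (Real.log b₂)⁻¹ :=
    mul_lt_mul_of_neg_left hinv hlu
  simp only [Real.logb, div_eq_mul_inv]
  linarith
end

section
/- Let r > 0 and 0 < u₁ ≤ u₂ < 1 be real numbers. Then g(r, u₁) ≤ g(r, u₂), where g(r,u) := 2·log_{(1+r)u/(1+ru)} u and log_b x denotes the base-b logarithm (ln x)/(ln b). -/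
/-!
Put `s = log u` and `F s = log (1 + r * exp s)`. Then the logarithm of the base is
`log ((1 + r) u / (1 + r u)) = s - (F s - F 0)`, so `g(r, u) / 2 = 1 / (1 - k(s))` where
`k(s) = (F s - F 0) / s` is the slope of the secant of `F` through `0`. Since `F` is convex
(its derivative `1 - 1 / (1 + r exp s)` increases), `k` is monotone, and `k < 1` for `u < 1`
because the base is below `1`.
-/

open Real Set

lemma hasDerivAt_log_one_add_mul_exp {r : ℝ} (hr : 0 ≤ r) (s : ℝ) :
    HasDerivAt (fun s => log (1 + r * exp s)) (1 - (1 + r * exp s)⁻¹) s := by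
  have hpos : 0 < 1 + r * exp s := by positivity
  convert (((hasDerivAt_exp s).const_mul r).const_add 1).log hpos.ne' using 1
  field_simp
  ring

lemma convexOn_log_one_add_mul_exp {r : ℝ} (hr : 0 ≤ r) :
    ConvexOn ℝ univ (fun s => log (1 + r * exp s)) := by
  refine Monotone.convexOn_univ_of_deriv
    (fun s => (hasDerivAt_log_one_add_mul_exp hr s).differentiableAt) ?_
  rw [funext fun s => (hasDerivAt_log_one_add_mul_exp hr s).deriv]
  intro a b hab
  dsimp only
  gcongr

lemma log_base_eq_log_mul_one_sub_slope {r u : ℝ} (hr : 0 ≤ r) (hu0 : 0 < u) (hu1 : u ≠ 1) :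
    log ((1 + r) * u / (1 + r * u))
      = log u * (1 - slope (fun s => log (1 + r * exp s)) 0 (log u)) := by
  have hlog : log u ≠ 0 := log_ne_zero_of_pos_of_ne_one hu0 hu1
  rw [log_div (by positivity) (by positivity), log_mul (by positivity) hu0.ne',
    slope_def_field]
  simp only [exp_log hu0, exp_zero, mul_one, sub_zero]
  field_simp
  ring

lemma logb_base_eq_inv_one_sub_slope {r u : ℝ} (hr : 0 ≤ r) (hu0 : 0 < u) (hu1 : u ≠ 1) :
    logb ((1 + r) * u / (1 + r * u)) u
      = (1 - slope (fun s => log (1 + r * exp s)) 0 (log u))⁻¹ := by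
  rw [logb, log_base_eq_log_mul_one_sub_slope hr hu0 hu1,
    div_mul_cancel_left₀ (log_ne_zero_of_pos_of_ne_one hu0 hu1)]

lemma slope_log_one_add_mul_exp_lt_one {r u : ℝ} (hr : 0 ≤ r) (hu0 : 0 < u) (hu1 : u < 1) :
    slope (fun s => log (1 + r * exp s)) 0 (log u) < 1 := by
  have hbase : log ((1 + r) * u / (1 + r * u)) < 0 := by
    refine log_neg (by positivity) ?_
    rw [div_lt_one (by positivity)]
    nlinarith
  rw [log_base_eq_log_mul_one_sub_slope hr hu0 hu1.ne] at hbase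
  linarith [pos_of_mul_neg_right hbase (log_neg hu0 hu1).le]

theorem stmt_7 (r u₁ u₂ : ℝ) (hr : 0 < r) (hu1 : 0 < u₁) (hu : u₁ ≤ u₂) (hu2 : u₂ < 1) :
    2 * Real.logb ((1 + r) * u₁ / (1 + r * u₁)) u₁
      ≤ 2 * Real.logb ((1 + r) * u₂ / (1 + r * u₂)) u₂ := by
  have hu₁ : u₁ < 1 := hu.trans_lt hu2
  have hu₂ : 0 < u₂ := hu1.trans_le hu
  have hlog₁ : log u₁ ∈ univ \ {0} := ⟨trivial, (log_neg hu1 hu₁).ne⟩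
  have hlog₂ : log u₂ ∈ univ \ {0} := ⟨trivial, (log_neg hu₂ hu2).ne⟩
  have hslope := (convexOn_log_one_add_mul_exp hr.le).slope_mono (mem_univ 0) hlog₁ hlog₂
    (log_le_log hu1 hu)
  have hlt := slope_log_one_add_mul_exp_lt_one hr.le hu₂ hu2
  rw [logb_base_eq_inv_one_sub_slope hr.le hu1 hu₁.ne,
    logb_base_eq_inv_one_sub_slope hr.le hu₂ hu2.ne]
  gcongr
end

section
/- Let a, b > 0 be real numbers, c = √(a² + b²), and let α be a real number with α ≥ g(c, a/c), where g(r,u) := 2·log_{(1+r)u/(1+ru)} u and log_b x denotes the base-b logarithm (ln x)/(ln b). Then for all real r, u with r > 0, 0 < u < 1, r·u ≤ a, and r·√(1 − u²) ≤ b, one has ((1 + r)·u/(1 + r·u))^α ≤ u². -/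
/-!
Put `q = a / c` and let `K` be the exponent with `q ^ K = (1 + a) / (1 + c)`. Then `0 < K < 1`
and the threshold `g(c, q)` equals `2 / (1 - K)`, so it suffices to prove `(1 + r) u ^ K ≤ 1 + r u`,
i.e. `(1 + r) u / (1 + r u) ≤ u ^ (1 - K)`.

On the region `r ≤ c`, because `r² = (r u)² + (r √(1 - u²))² ≤ a² + b²`. The difference
`1 + r u - (1 + r) u ^ K` is affine in `r` and nonnegative at `r = 0`, so it is enough to check it
at `r = c` when `u ≤ q` and at `r = a / u` when `u ≥ q`. In the first case this is the tangent line
bound for the concave function `u ^ K` at `q`, which holds because `a ≤ (1 + a) K` (Bernoulli).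
In the second, writing `u = q ^ t` with `t ∈ [0, 1]`, both terms of `u ^ K + a u ^ (K - 1)` are
exponentials in `t`, hence lie below their chords, and the chords add up to `1 + a` at both ends.
-/

open Real

lemma rpow_le_one_add_mul_sub_one {x p : ℝ} (hx : 0 ≤ x) (hp0 : 0 ≤ p) (hp1 : p ≤ 1) :
    x ^ p ≤ 1 + p * (x - 1) := by
  simpa using rpow_one_add_le_one_add_mul_self (s := x - 1) (by linarith) hp0 hp1

lemma one_add_mul_le_of_le_of_le {r R u v : ℝ} (hr : 0 ≤ r) (hrR : r ≤ R) (hv1 : v ≤ 1)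
    (hR : (1 + R) * v ≤ 1 + R * u) : (1 + r) * v ≤ 1 + r * u := by
  rcases le_total v u with hvu | huv
  · nlinarith [mul_nonneg hr (sub_nonneg.2 hvu)]
  · nlinarith [mul_nonneg (sub_nonneg.2 hrR) (sub_nonneg.2 huv)]

lemma le_sqrt_sq_add_sq {a b r u : ℝ} (hr : 0 ≤ r) (hu : 0 ≤ u) (hu1 : u ≤ 1)
    (hra : r * u ≤ a) (hrb : r * √(1 - u ^ 2) ≤ b) : r ≤ √(a ^ 2 + b ^ 2) := by
  have hs : √(1 - u ^ 2) ^ 2 = 1 - u ^ 2 := sq_sqrt (by nlinarith)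
  rw [le_sqrt hr (by nlinarith [sq_nonneg a, sq_nonneg b])]
  have h1 : (r * u) ^ 2 ≤ a ^ 2 := pow_le_pow_left₀ (by positivity) hra 2
  have h2 : (r * √(1 - u ^ 2)) ^ 2 ≤ b ^ 2 := pow_le_pow_left₀ (by positivity) hrb 2
  nlinarith

section Exponent

variable {a c K : ℝ}

lemma exponent_pos_lt_one (ha : 0 < a) (hac : a < c) (hK : (a / c) ^ K = (1 + a) / (1 + c)) :
    0 < K ∧ K < 1 := by
  have hc : 0 < c := ha.trans hac
  have hq0 : 0 < a / c := div_pos ha hc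
  have hq1 : a / c < 1 := (div_lt_one hc).2 hac
  constructor
  · rw [← rpow_lt_rpow_left_iff_of_base_lt_one hq0 hq1, rpow_zero, hK, div_lt_one (by linarith)]
    linarith
  · rw [← rpow_lt_rpow_left_iff_of_base_lt_one hq0 hq1, rpow_one, hK,
      div_lt_div_iff₀ hc (by linarith)]
    nlinarith

lemma le_one_add_mul_exponent (ha : 0 < a) (hac : a < c) (hK : (a / c) ^ K = (1 + a) / (1 + c)) :
    a ≤ (1 + a) * K := by
  obtain ⟨hK0, hK1⟩ := exponent_pos_lt_one ha hac hK
  have hc : 0 < c := ha.trans hac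
  have hinv : (c / a) ^ K = (1 + c) / (1 + a) := by
    rw [← inv_div, inv_rpow (by positivity), hK, inv_div]
  have h := rpow_le_one_add_mul_sub_one (div_pos hc ha).le hK0.le hK1.le
  rw [hinv, div_le_iff₀ (by linarith), ← sub_nonneg] at h
  have e : (1 + K * (c / a - 1)) * (1 + a) - (1 + c) = (c - a) / a * ((1 + a) * K - a) := by
    field_simp; ring
  rw [e] at h
  linarith [nonneg_of_mul_nonneg_right h (div_pos (sub_pos.2 hac) ha)]

lemma one_add_mul_rpow_le_of_le_div (ha : 0 < a) (hac : a < c)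
    (hK : (a / c) ^ K = (1 + a) / (1 + c)) {u : ℝ} (hu : 0 < u) (huq : u ≤ a / c) :
    (1 + c) * u ^ K ≤ 1 + c * u := by
  obtain ⟨hK0, hK1⟩ := exponent_pos_lt_one ha hac hK
  have hc : 0 < c := ha.trans hac
  have hcu : c * u ≤ a := by rwa [le_div_iff₀ hc, mul_comm] at huq
  have hsplit : u ^ K = (1 + a) / (1 + c) * (c * u / a) ^ K := by
    rw [← hK, ← mul_rpow (by positivity) (by positivity)]
    congr 1; field_simp
  have hbern := rpow_le_one_add_mul_sub_one (x := c * u / a) (by positivity) hK0.le hK1.le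
  have hKa := le_one_add_mul_exponent ha hac hK
  calc (1 + c) * u ^ K ≤ (1 + a) * (1 + K * (c * u / a - 1)) := by
        rw [hsplit, ← mul_assoc, mul_div_cancel₀ _ (by linarith)]
        gcongr
    _ = 1 + c * u + ((1 + a) * K - a) * (c * u / a - 1) := by field_simp; ring
    _ ≤ 1 + c * u := by
        have : c * u / a ≤ 1 := (div_le_one ha).2 hcu
        nlinarith

lemma one_add_div_mul_rpow_le_of_div_le (ha : 0 < a) (hac : a < c)
    (hK : (a / c) ^ K = (1 + a) / (1 + c)) {u : ℝ} (hqu : a / c ≤ u) (hu1 : u ≤ 1) :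
    (1 + a / u) * u ^ K ≤ 1 + a := by
  obtain ⟨hK0, hK1⟩ := exponent_pos_lt_one ha hac hK
  have hc : 0 < c := ha.trans hac
  have hq0 : 0 < a / c := div_pos ha hc
  have hq1 : a / c < 1 := (div_lt_one hc).2 hac
  have hu : 0 < u := hq0.trans_le hqu
  set t := logb (a / c) u
  have hut : (a / c) ^ t = u := rpow_logb hq0 hq1.ne hu
  have ht0 : 0 ≤ t := logb_nonneg_of_base_lt_one hq0 hq1 hu hu1
  have ht1 : t ≤ 1 := by
    rwa [logb_le_iff_le_rpow_of_base_lt_one hq0 hq1 hu, rpow_one]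
  have huK : u ^ K = ((1 + a) / (1 + c)) ^ t := by
    rw [← hut, ← hK, ← rpow_mul hq0.le, ← rpow_mul hq0.le, mul_comm]
  have huK' : u ^ K / u = ((1 + a) / (1 + c) / (a / c)) ^ t := by
    rw [huK, div_rpow (by positivity) hq0.le, hut]
  have h1 := rpow_le_one_add_mul_sub_one (x := (1 + a) / (1 + c)) (by positivity) ht0 ht1
  have h2 := rpow_le_one_add_mul_sub_one (x := (1 + a) / (1 + c) / (a / c)) (by positivity) ht0 ht1
  calc (1 + a / u) * u ^ K = u ^ K + a * (u ^ K / u) := by field_simp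
    _ ≤ (1 + t * ((1 + a) / (1 + c) - 1)) + a * (1 + t * ((1 + a) / (1 + c) / (a / c) - 1)) := by
        rw [huK', huK]
        gcongr
    _ = 1 + a := by field_simp; ring

lemma one_add_mul_rpow_le (ha : 0 < a) (hac : a < c) (hK : (a / c) ^ K = (1 + a) / (1 + c))
    {r u : ℝ} (hr : 0 ≤ r) (hu : 0 < u) (hu1 : u ≤ 1) (hrc : r ≤ c) (hra : r * u ≤ a) :
    (1 + r) * u ^ K ≤ 1 + r * u := by
  have huK : u ^ K ≤ 1 := rpow_le_one hu.le hu1 (exponent_pos_lt_one ha hac hK).1.le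
  rcases le_total u (a / c) with huq | hqu
  · exact one_add_mul_le_of_le_of_le hr hrc huK (one_add_mul_rpow_le_of_le_div ha hac hK hu huq)
  · refine one_add_mul_le_of_le_of_le hr ((le_div_iff₀ hu).2 hra) huK ?_
    rw [div_mul_cancel₀ _ hu.ne']
    exact one_add_div_mul_rpow_le_of_div_le ha hac hK hqu hu1

lemma logb_threshold_eq (ha : 0 < a) (hac : a < c) (hK : (a / c) ^ K = (1 + a) / (1 + c)) :
    logb ((1 + c) * (a / c) / (1 + c * (a / c))) (a / c) = (1 - K)⁻¹ := by
  have hc : 0 < c := ha.trans hac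
  have hq0 : 0 < a / c := div_pos ha hc
  have hbase : (1 + c) * (a / c) / (1 + c * (a / c)) = (a / c) ^ (1 - K) := by
    rw [rpow_sub hq0, rpow_one, hK, mul_div_cancel₀ _ hc.ne']
    field_simp
  rw [hbase, ← inv_logb, logb_rpow hq0 ((div_lt_one hc).2 hac).ne]

end Exponent

lemma rpow_le_sq_of_one_add_mul_rpow_le {r u K α : ℝ} (hr : 0 ≤ r) (hu : 0 < u) (hu1 : u ≤ 1)
    (hK1 : K < 1) (hα : 2 * (1 - K)⁻¹ ≤ α) (h : (1 + r) * u ^ K ≤ 1 + r * u) :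
    ((1 + r) * u / (1 + r * u)) ^ α ≤ u ^ 2 := by
  have hK1' : 0 < 1 - K := sub_pos.2 hK1
  have hα' : 2 ≤ (1 - K) * α := by
    rwa [← div_eq_mul_inv, div_le_iff₀ hK1', mul_comm] at hα
  have hB : (1 + r) * u / (1 + r * u) ≤ u ^ (1 - K) := by
    rw [rpow_sub hu, rpow_one, div_le_div_iff₀ (by positivity) (rpow_pos_of_pos hu K)]
    nlinarith
  calc ((1 + r) * u / (1 + r * u)) ^ α ≤ (u ^ (1 - K)) ^ α :=
        rpow_le_rpow (by positivity) hB (by nlinarith)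
    _ = u ^ ((1 - K) * α) := (rpow_mul hu.le _ _).symm
    _ ≤ u ^ (2 : ℝ) := rpow_le_rpow_of_exponent_ge hu hu1 hα'
    _ = u ^ 2 := rpow_two u

theorem stmt_8 (a b α : ℝ) (ha : 0 < a) (hb : 0 < b)
    (hα : α ≥ 2 * Real.logb
      ((1 + Real.sqrt (a ^ 2 + b ^ 2)) * (a / Real.sqrt (a ^ 2 + b ^ 2)) /
        (1 + Real.sqrt (a ^ 2 + b ^ 2) * (a / Real.sqrt (a ^ 2 + b ^ 2))))
      (a / Real.sqrt (a ^ 2 + b ^ 2))) :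
    ∀ r u : ℝ, 0 < r → 0 < u → u < 1 → r * u ≤ a → r * Real.sqrt (1 - u ^ 2) ≤ b →
      ((1 + r) * u / (1 + r * u)) ^ α ≤ u ^ 2 := by
  intro r u hr hu hu1 hra hrb
  set c := √(a ^ 2 + b ^ 2)
  have hac : a < c := lt_sqrt_of_sq_lt (by nlinarith)
  have hc : 0 < c := ha.trans hac
  set K := logb (a / c) ((1 + a) / (1 + c))
  have hK : (a / c) ^ K = (1 + a) / (1 + c) :=
    rpow_logb (div_pos ha hc) ((div_lt_one hc).2 hac).ne (by positivity)
  rw [logb_threshold_eq ha hac hK] at hα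
  exact rpow_le_sq_of_one_add_mul_rpow_le hr.le hu hu1.le (exponent_pos_lt_one ha hac hK).2 hα
    (one_add_mul_rpow_le ha hac hK hr.le hu hu1.le
      (le_sqrt_sq_add_sq hr.le hu.le hu1.le hra hrb) hra)
end

section
/- Let a, b be real numbers with 0 < a ≤ b, let c = √(a² + b²), and let α be a real number with α ≥ g(c, b/c), where g(r,u) := 2·log_{(1+r)u/(1+ru)} u and log_b x denotes the base-b logarithm (ln x)/(ln b). Then for all real x, y with 0 ≤ x ≤ a and 0 ≤ y ≤ b, writing s = √(x² + y²), one has (x/(x+1))^α + (y/(y+1))^α ≤ (s/(s+1))^α. -/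
open Real Set

/-!
Write `χ t = (t / (t + 1)) ^ α`. Since `x² + y² = s²`, it suffices that `χ t / t² ≤ χ s / s²` for
`t ∈ {x, y}`. In the variable `u = log t` one has `log (χ t / t²) = ψ u := α log σ(u) - 2u` with `σ`
the sigmoid, and `ψ` is concave because `log σ` is. The hypothesis on `α` says exactly that
`ψ (log b) ≤ ψ (log c)`, and for a concave function this forces `ψ u ≤ ψ v` whenever `u ≤ log b`
and `u ≤ v ≤ log c`.
-/

theorem ConcaveOn.apply_le_apply_of_apply_le {s : Set ℝ} {f : ℝ → ℝ} (hf : ConcaveOn ℝ s f)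
    {p q u v : ℝ} (hp : p ∈ s) (hq : q ∈ s) (hu : u ∈ s) (hv : v ∈ s) (hpq : p < q)
    (hfpq : f p ≤ f q) (hup : u ≤ p) (huv : u ≤ v) (hvq : v ≤ q) : f u ≤ f v := by
  obtain rfl | huv := huv.eq_or_lt
  · rfl
  have hf' := neg_convexOn_iff.mpr hf
  have h₁ := hf'.secant_mono hu hv hq huv.ne' (huv.trans_le hvq).ne' hvq
  have h₂ := hf'.secant_mono hq hu hp (hup.trans_lt hpq).ne hpq.ne hup
  simp only [Pi.neg_apply, neg_sub_neg] at h₁ h₂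
  have hflip : (f u - f q) / (q - u) = (f q - f u) / (u - q) := by
    rw [← neg_div_neg_eq, neg_sub, neg_sub]
  have hpq' : (f q - f p) / (p - q) ≤ 0 :=
    div_nonpos_of_nonneg_of_nonpos (by linarith) (by linarith)
  have := (div_le_iff₀ (sub_pos.2 huv)).1 (((h₁.trans hflip.le).trans h₂).trans hpq')
  linarith

theorem Real.sigmoid_log {t : ℝ} (ht : 0 < t) : sigmoid (log t) = t / (t + 1) := by
  rw [sigmoid_def, exp_neg, exp_log ht]
  field_simp

theorem Real.concaveOn_log_sigmoid : ConcaveOn ℝ univ fun u ↦ log (sigmoid u) := by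
  have hderiv (u : ℝ) : HasDerivAt (fun u ↦ log (sigmoid u)) (1 - sigmoid u) u := by
    convert (hasDerivAt_sigmoid u).log (sigmoid_pos u).ne' using 1
    field_simp [(sigmoid_pos u).ne']
  refine Antitone.concaveOn_univ_of_deriv (fun u ↦ (hderiv u).differentiableAt) ?_
  rw [funext fun u ↦ (hderiv u).deriv]
  exact fun u v huv ↦ sub_le_sub_left (sigmoid_le huv) 1

theorem Real.strictMono_log_sigmoid : StrictMono fun u ↦ log (sigmoid u) :=
  fun _ _ h ↦ log_lt_log (sigmoid_pos _) (sigmoid_lt h)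

theorem log_div_add_one_rpow_div_sq {t : ℝ} (ht : 0 < t) (α : ℝ) :
    log ((t / (t + 1)) ^ α / t ^ 2) = α * log (sigmoid (log t)) - 2 * log t := by
  rw [sigmoid_log ht, log_div (by positivity) (by positivity), log_rpow (by positivity), log_pow]
  push_cast
  ring

theorem logb_div_add_one_div {b c : ℝ} (hb : 0 < b) (hc : 0 < c) :
    logb ((1 + c) * (b / c) / (1 + c * (b / c))) (b / c) =
      (log c - log b) / (log (sigmoid (log c)) - log (sigmoid (log b))) := by
  have hB : (1 + c) * (b / c) / (1 + c * (b / c)) = (b / (b + 1)) / (c / (c + 1)) := by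
    field_simp
    ring
  rw [logb, hB, log_div hb.ne' hc.ne', log_div (by positivity) (by positivity), sigmoid_log hb,
    sigmoid_log hc, ← neg_div_neg_eq, neg_sub, neg_sub]

theorem logb_div_add_one_div_pos {b c : ℝ} (hb : 0 < b) (hbc : b < c) :
    0 < logb ((1 + c) * (b / c) / (1 + c * (b / c))) (b / c) := by
  have hlog := log_lt_log hb hbc
  rw [logb_div_add_one_div hb (hb.trans hbc)]
  exact div_pos (sub_pos.2 hlog) (sub_pos.2 (strictMono_log_sigmoid hlog))

theorem div_add_one_rpow_div_sq_le_of_two_mul_logb_le {α b c : ℝ} (hb : 0 < b) (hbc : b < c)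
    (hα : 2 * logb ((1 + c) * (b / c) / (1 + c * (b / c))) (b / c) ≤ α) :
    (b / (b + 1)) ^ α / b ^ 2 ≤ (c / (c + 1)) ^ α / c ^ 2 := by
  have hc := hb.trans hbc
  have hlog := strictMono_log_sigmoid (log_lt_log hb hbc)
  rw [logb_div_add_one_div hb hc, mul_div_assoc', div_le_iff₀ (sub_pos.2 hlog)] at hα
  rw [← log_le_log_iff (by positivity) (by positivity), log_div_add_one_rpow_div_sq hb,
    log_div_add_one_rpow_div_sq hc]
  linarith

theorem div_add_one_rpow_le_sq_mul {α b c t s : ℝ} (hα : 0 < α) (hb : 0 < b) (hbc : b < c)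
    (hbcα : (b / (b + 1)) ^ α / b ^ 2 ≤ (c / (c + 1)) ^ α / c ^ 2) (ht : 0 ≤ t) (hts : t ≤ s)
    (htb : t ≤ b) (hsc : s ≤ c) :
    (t / (t + 1)) ^ α ≤ t ^ 2 * ((s / (s + 1)) ^ α / s ^ 2) := by
  obtain rfl | ht := ht.eq_or_lt
  · simp [zero_rpow hα.ne']
  have hs := ht.trans_le hts
  have hc := hb.trans hbc
  have hψ : ConcaveOn ℝ univ fun u ↦ α * log (sigmoid u) - 2 * u :=
    (concaveOn_log_sigmoid.smul hα.le).sub ((convexOn_id convex_univ).smul zero_le_two)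
  rw [← div_le_iff₀' (by positivity), ← log_le_log_iff (by positivity) (by positivity),
    log_div_add_one_rpow_div_sq ht, log_div_add_one_rpow_div_sq hs]
  rw [← log_le_log_iff (by positivity) (by positivity), log_div_add_one_rpow_div_sq hb,
    log_div_add_one_rpow_div_sq hc] at hbcα
  exact hψ.apply_le_apply_of_apply_le trivial trivial trivial trivial (log_lt_log hb hbc) hbcα
    (log_le_log ht htb) (log_le_log ht hts) (log_le_log hs hsc)

theorem stmt_9 (a b α : ℝ) (ha : 0 < a) (hab : a ≤ b)
    (hα : α ≥ 2 * Real.logb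
      ((1 + Real.sqrt (a ^ 2 + b ^ 2)) * (b / Real.sqrt (a ^ 2 + b ^ 2)) /
        (1 + Real.sqrt (a ^ 2 + b ^ 2) * (b / Real.sqrt (a ^ 2 + b ^ 2))))
      (b / Real.sqrt (a ^ 2 + b ^ 2))) :
    ∀ x y : ℝ, 0 ≤ x → x ≤ a → 0 ≤ y → y ≤ b →
      (x / (x + 1)) ^ α + (y / (y + 1)) ^ α ≤
        (Real.sqrt (x ^ 2 + y ^ 2) / (Real.sqrt (x ^ 2 + y ^ 2) + 1)) ^ α := by
  intro x y hx hxa hy hyb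
  have hb : 0 < b := ha.trans_le hab
  have hbc : b < √(a ^ 2 + b ^ 2) := (lt_sqrt hb.le).2 (by nlinarith)
  have hα0 : 0 < α := lt_of_lt_of_le (by linarith [logb_div_add_one_div_pos hb hbc]) hα
  have hbcα := div_add_one_rpow_div_sq_le_of_two_mul_logb_le hb hbc hα
  obtain rfl | hx0 := hx.eq_or_lt
  · simp [zero_rpow hα0.ne', sqrt_sq hy]
  set s := √(x ^ 2 + y ^ 2) with hs_def
  have hs : 0 < s := sqrt_pos.2 (by positivity)
  have hsc : s ≤ √(a ^ 2 + b ^ 2) := sqrt_le_sqrt (by nlinarith)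
  have hxs : x ≤ s := (le_sqrt hx (by positivity)).2 (by nlinarith)
  have hys : y ≤ s := (le_sqrt hy (by positivity)).2 (by nlinarith)
  calc (x / (x + 1)) ^ α + (y / (y + 1)) ^ α
      ≤ x ^ 2 * ((s / (s + 1)) ^ α / s ^ 2) + y ^ 2 * ((s / (s + 1)) ^ α / s ^ 2) :=
        add_le_add (div_add_one_rpow_le_sq_mul hα0 hb hbc hbcα hx hxs (hxa.trans hab) hsc)
          (div_add_one_rpow_le_sq_mul hα0 hb hbc hbcα hy hys hyb hsc)
    _ = (s / (s + 1)) ^ α := by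
        rw [← add_mul, ← sq_sqrt (by positivity : 0 ≤ x ^ 2 + y ^ 2), ← hs_def]
        field_simp
end

section
/- Let α ≥ log_{3(√2−1)} 2 be a real number, where log_b x denotes the base-b logarithm (ln x)/(ln b). Then for all real x, y with 0 ≤ x ≤ 1/2 and 0 ≤ y ≤ 1/2, writing s = √(x² + y²), one has (x/(x+1))^α + (y/(y+1))^α ≤ (s/(s+1))^α. -/
/-!
Let `c = log_{3(√2-1)} 2`, `F t = (t / (t + 1)) ^ c`, `s = √(x² + y²)`, and `x ≤ y`. Since
`F x / F s` and `F y / F s` are at most `1`, the inequality for `α ≥ c` follows from the one for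
`α = c`. Rescaling `(x, y)` to `(x / (2y), 1/2)` can only increase both ratios, so it suffices to
treat `y = 1/2`, i.e. to show that `G x = F √(x² + 1/4) - F x - F (1/2)` is nonnegative on
`[0, 1/2]`. It vanishes at `x = 0` and, because `(3 (√2 - 1)) ^ c = 2`, at `x = 1/2`. Its
derivative is `c x (h √(x² + 1/4) - h x)` with `h t = t ^ (c - 2) / (t + 1) ^ (c + 1)`, which
increases up to `(c - 2) / 3 ≤ 1/2` and decreases afterwards; so `G'` changes sign at most once,
from `+` to `-`, and `G` stays above its endpoint values.
-/

open Real Set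

lemma min_le_of_hasDerivAt_of_sign_change {f f' : ℝ → ℝ} {a b y : ℝ}
    (hf : ContinuousOn f (Icc a b)) (hf' : ∀ x ∈ Ioo a b, HasDerivAt f (f' x) x)
    (hsign : ∀ x₁ ∈ Ioo a b, ∀ x₂ ∈ Ioo a b, x₁ < x₂ → f' x₁ < 0 → f' x₂ ≤ 0)
    (hy : y ∈ Icc a b) : min (f a) (f b) ≤ f y := by
  by_cases hinc : ∀ x ∈ Ioo a y, 0 ≤ f' x
  · have hmono : MonotoneOn f (Icc a y) := by
      refine monotoneOn_of_hasDerivWithinAt_nonneg (f' := f') (convex_Icc a y)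
        (hf.mono (Icc_subset_Icc_right hy.2)) (fun x hx => ?_) (fun x hx => ?_) <;>
        rw [interior_Icc] at hx
      · exact (hf' x (Ioo_subset_Ioo_right hy.2 hx)).hasDerivWithinAt
      · exact hinc x hx
    exact min_le_of_left_le (hmono (left_mem_Icc.mpr hy.1) (right_mem_Icc.mpr hy.1) hy.1)
  · obtain ⟨x₁, hx₁, hneg⟩ : ∃ x ∈ Ioo a y, f' x < 0 := by
      simpa only [not_forall, not_le, exists_prop] using hinc
    have hanti : AntitoneOn f (Icc y b) := by
      refine antitoneOn_of_hasDerivWithinAt_nonpos (f' := f') (convex_Icc y b)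
        (hf.mono (Icc_subset_Icc_left hy.1)) (fun x hx => ?_) (fun x hx => ?_) <;>
        rw [interior_Icc] at hx
      · exact (hf' x (Ioo_subset_Ioo_left hy.1 hx)).hasDerivWithinAt
      · have hx₁x : x₁ < x := hx₁.2.trans hx.1
        exact hsign x₁ ⟨hx₁.1, hx₁x.trans hx.2⟩ x ⟨hx₁.1.trans hx₁x, hx.2⟩ hx₁x hneg
    exact min_le_of_right_le (hanti (left_mem_Icc.mpr hy.2) (right_mem_Icc.mpr hy.2) hy.2)

lemma rpow_add_rpow_le_rpow_of_le {a b s p q : ℝ} (ha : 0 ≤ a) (hb : 0 ≤ b) (hs : 0 ≤ s)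
    (hp : 0 < p) (hpq : p ≤ q) (h : a ^ p + b ^ p ≤ s ^ p) : a ^ q + b ^ q ≤ s ^ q := by
  lift a to NNReal using ha
  lift b to NNReal using hb
  lift s to NNReal using hs
  norm_cast at h ⊢
  have hq : 0 < q := hp.trans_le hpq
  calc a ^ q + b ^ q = ((a ^ q + b ^ q) ^ (1 / q)) ^ q := by
        rw [← NNReal.rpow_mul, one_div_mul_cancel hq.ne', NNReal.rpow_one]
    _ ≤ ((a ^ p + b ^ p) ^ (1 / p)) ^ q := by gcongr; exact NNReal.rpow_add_rpow_le a b hp hpq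
    _ ≤ ((s ^ p) ^ (1 / p)) ^ q := by gcongr
    _ = s ^ q := by
        rw [← NNReal.rpow_mul, ← NNReal.rpow_mul, ← mul_assoc, mul_one_div_cancel hp.ne', one_mul]

namespace RatioNegativity

noncomputable def fracPow (p t : ℝ) : ℝ := (t / (t + 1)) ^ p

noncomputable def derivFactor (p t : ℝ) : ℝ := t ^ (p - 2) / (t + 1) ^ (p + 1)

section
variable {p t : ℝ}

lemma hasDerivAt_derivFactor (ht : 0 < t) :
    HasDerivAt (derivFactor p) ((p - 2 - 3 * t) * t ^ (p - 3) / (t + 1) ^ (p + 2)) t := by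
  have ht1 : 0 < t + 1 := by linarith
  have hnum := Real.hasDerivAt_rpow_const (p := p - 2) (Or.inl ht.ne')
  have hden := ((hasDerivAt_id t).add_const 1).rpow_const (p := p + 1) (Or.inl ht1.ne')
  refine (hnum.div hden (by positivity)).congr_deriv ?_
  have e1 : t ^ (p - 2) = t ^ (p - 3) * t := by
    rw [← Real.rpow_add_one ht.ne']; ring_nf
  have e2 : (t + 1) ^ (p + 2) = (t + 1) ^ p * (t + 1) ^ (2 : ℕ) := by
    rw [← Real.rpow_natCast, ← Real.rpow_add ht1]; norm_num
  have e3 : (t + 1) ^ (p + 1) = (t + 1) ^ p * (t + 1) := by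
    rw [← Real.rpow_add_one ht1.ne']
  have e4 : (t + 1) ^ (p + 1 - 1) = (t + 1) ^ p := by ring_nf
  simp only [id, e4, e1, e2, e3, show p - 2 - 1 = p - 3 by ring]
  field_simp
  ring

lemma continuousOn_derivFactor (hp : 2 ≤ p) : ContinuousOn (derivFactor p) (Ici 0) := by
  intro t ht
  have ht1 : 0 < t + 1 := by linarith [mem_Ici.mp ht]
  refine ContinuousAt.continuousWithinAt (ContinuousAt.div ?_ ?_ (by positivity))
  · exact Real.continuousAt_rpow_const _ _ (Or.inr (by linarith))
  · exact (continuousAt_id.add continuousAt_const).rpow_const (Or.inl ht1.ne')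

lemma monotoneOn_derivFactor (hp : 2 ≤ p) : MonotoneOn (derivFactor p) (Icc 0 ((p - 2) / 3)) := by
  refine monotoneOn_of_hasDerivWithinAt_nonneg
    (f' := fun t => (p - 2 - 3 * t) * t ^ (p - 3) / (t + 1) ^ (p + 2)) (convex_Icc _ _)
    ((continuousOn_derivFactor hp).mono Icc_subset_Ici_self)
    (fun t ht => ?_) (fun t ht => ?_) <;> rw [interior_Icc] at ht
  · exact (hasDerivAt_derivFactor ht.1).hasDerivWithinAt
  · have ht0 : 0 < t := ht.1
    have hsign : 0 ≤ p - 2 - 3 * t := by linarith [ht.2]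
    positivity

lemma antitoneOn_derivFactor (hp : 2 < p) : AntitoneOn (derivFactor p) (Ici ((p - 2) / 3)) := by
  have ht₀ : 0 < (p - 2) / 3 := by linarith
  refine antitoneOn_of_hasDerivWithinAt_nonpos
    (f' := fun t => (p - 2 - 3 * t) * t ^ (p - 3) / (t + 1) ^ (p + 2)) (convex_Ici _)
    ((continuousOn_derivFactor hp.le).mono (Ici_subset_Ici.mpr ht₀.le))
    (fun t ht => ?_) (fun t ht => ?_) <;> rw [interior_Ici, mem_Ioi] at ht
  · exact (hasDerivAt_derivFactor (ht₀.trans ht)).hasDerivWithinAt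
  have ht0 : 0 < t := ht₀.trans ht
  exact div_nonpos_of_nonpos_of_nonneg
    (mul_nonpos_of_nonpos_of_nonneg (by linarith) (by positivity)) (by positivity)

lemma hasDerivAt_fracPow (ht : 0 < t) : HasDerivAt (fracPow p) (p * t * derivFactor p t) t := by
  have ht1 : 0 < t + 1 := by linarith
  have hquot : HasDerivAt (fun t : ℝ => t / (t + 1)) (1 / (t + 1) ^ 2) t := by
    refine ((hasDerivAt_id t).div ((hasDerivAt_id t).add_const 1) ht1.ne').congr_deriv ?_
    simp only [id]
    ring
  refine (hquot.rpow_const (p := p) (Or.inl (by positivity))).congr_deriv ?_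
  have e1 : t ^ (p - 1) = t ^ (p - 2) * t := by
    rw [← Real.rpow_add_one ht.ne']; ring_nf
  have e2 : (t + 1) ^ (p + 1) = (t + 1) ^ (p - 1) * (t + 1) ^ (2 : ℕ) := by
    rw [← Real.rpow_natCast, ← Real.rpow_add ht1]; norm_num; ring_nf
  rw [derivFactor, Real.div_rpow ht.le ht1.le, e1, e2]
  field_simp

lemma continuousOn_fracPow (hp : 0 ≤ p) : ContinuousOn (fracPow p) (Ici 0) := by
  intro t ht
  have ht1 : t + 1 ≠ 0 := by linarith [mem_Ici.mp ht]
  exact ((continuousAt_id.div (continuousAt_id.add continuousAt_const) ht1).rpow_const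
    (Or.inr hp)).continuousWithinAt

lemma fracPow_zero (hp : p ≠ 0) : fracPow p 0 = 0 := by
  simp [fracPow, Real.zero_rpow hp]

end

noncomputable def pythagGap (p z y : ℝ) : ℝ :=
  fracPow p √(y ^ 2 + z ^ 2) - fracPow p y - fracPow p z

lemma hasDerivAt_pythagGap {p y z : ℝ} (hy : 0 < y) :
    HasDerivAt (pythagGap p z) (p * y * (derivFactor p √(y ^ 2 + z ^ 2) - derivFactor p y)) y := by
  have hs : 0 < √(y ^ 2 + z ^ 2) := Real.sqrt_pos.mpr (by positivity)
  have hsqrt : HasDerivAt (fun y => √(y ^ 2 + z ^ 2)) (y / √(y ^ 2 + z ^ 2)) y := by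
    refine (((hasDerivAt_pow 2 y).add_const (z ^ 2)).sqrt (by positivity)).congr_deriv ?_
    field_simp
    ring
  refine (((hasDerivAt_fracPow hs).comp y hsqrt).sub (hasDerivAt_fracPow hy)).sub_const _
    |>.congr_deriv ?_
  field_simp

lemma derivFactor_sign_change {p y₁ y₂ z : ℝ} (hp : 2 < p) (hz : (p - 2) / 3 ≤ z) (hy₁ : 0 ≤ y₁)
    (hy : y₁ < y₂)
    (hneg : derivFactor p √(y₁ ^ 2 + z ^ 2) < derivFactor p y₁) :
    derivFactor p √(y₂ ^ 2 + z ^ 2) ≤ derivFactor p y₂ := by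
  have hs : ∀ y, z ≤ √(y ^ 2 + z ^ 2) := fun y =>
    Real.le_sqrt_of_sq_le (by nlinarith [sq_nonneg y])
  rcases le_or_gt y₂ ((p - 2) / 3) with hy₂ | hy₂
  · calc derivFactor p √(y₂ ^ 2 + z ^ 2) ≤ derivFactor p √(y₁ ^ 2 + z ^ 2) :=
          antitoneOn_derivFactor hp (hz.trans (hs y₁)) (hz.trans (hs y₂))
            (Real.sqrt_le_sqrt (by nlinarith))
      _ ≤ derivFactor p y₁ := hneg.le
      _ ≤ derivFactor p y₂ :=
          monotoneOn_derivFactor hp.le ⟨hy₁, by linarith⟩ ⟨by linarith, hy₂⟩ hy.le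
  · exact antitoneOn_derivFactor hp hy₂.le (hy₂.le.trans (Real.le_sqrt_of_sq_le (by nlinarith)))
      (Real.le_sqrt_of_sq_le (by nlinarith))

lemma min_le_pythagGap {p y z : ℝ} (hp : 2 < p) (hz : (p - 2) / 3 ≤ z) (hy : y ∈ Icc 0 z) :
    min 0 (pythagGap p z z) ≤ pythagGap p z y := by
  have hz0 : 0 ≤ z := le_trans (by linarith) hz
  have hgap0 : pythagGap p z 0 = 0 := by
    simp [pythagGap, Real.sqrt_sq hz0, fracPow_zero (by linarith : p ≠ 0)]
  have hcont : ContinuousOn (pythagGap p z) (Icc 0 z) := by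
    have hF := continuousOn_fracPow (by linarith : 0 ≤ p)
    refine ((hF.comp (by fun_prop) (fun y _ => Real.sqrt_nonneg _)).sub
      (hF.mono Icc_subset_Ici_self)).sub continuousOn_const
  rw [← hgap0]
  refine min_le_of_hasDerivAt_of_sign_change hcont (fun x hx => hasDerivAt_pythagGap hx.1)
    (fun x₁ hx₁ x₂ hx₂ hlt hneg => ?_) hy
  have hpx₁ : 0 < p * x₁ := by nlinarith [hx₁.1]
  have hD : derivFactor p √(x₁ ^ 2 + z ^ 2) < derivFactor p x₁ := by
    by_contra! h
    exact hneg.not_ge (mul_nonneg hpx₁.le (sub_nonneg.mpr h))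
  exact mul_nonpos_of_nonneg_of_nonpos (by nlinarith [hx₂.1])
    (sub_nonpos.mpr (derivFactor_sign_change hp hz hx₁.1.le hlt hD))

noncomputable def threshold : ℝ := logb (3 * (√2 - 1)) 2

lemma sqrt_two_mem_Icc : √2 ∈ Icc (1.41 : ℝ) 1.42 :=
  ⟨Real.le_sqrt_of_sq_le (by norm_num), (Real.sqrt_le_left (by norm_num)).mpr (by norm_num)⟩

lemma one_lt_threshold_base : 1 < 3 * (√2 - 1) := by
  linarith [sqrt_two_mem_Icc.1]

lemma two_lt_threshold : 2 < threshold := by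
  rw [threshold, Real.lt_logb_iff_rpow_lt one_lt_threshold_base two_pos]
  have := sqrt_two_mem_Icc
  norm_cast
  nlinarith [this.1, this.2]

lemma threshold_le : threshold ≤ 7 / 2 := by
  rw [threshold, Real.logb_le_iff_le_rpow one_lt_threshold_base two_pos]
  have hb := one_lt_threshold_base
  have hsq : ((3 * (√2 - 1)) ^ (7 / 2 : ℝ)) ^ 2 = (3 * (√2 - 1)) ^ 7 := by
    rw [← Real.rpow_natCast, ← Real.rpow_mul (by linarith)]
    norm_num
  have h7 : (1.23 : ℝ) ^ 7 ≤ (3 * (√2 - 1)) ^ 7 :=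
    pow_le_pow_left₀ (by norm_num) (by linarith [sqrt_two_mem_Icc.1]) 7
  nlinarith [Real.rpow_nonneg (by linarith : (0 : ℝ) ≤ 3 * (√2 - 1)) (7 / 2)]

lemma threshold_base_rpow : (3 * (√2 - 1)) ^ threshold = 2 :=
  Real.rpow_logb (by linarith [one_lt_threshold_base]) one_lt_threshold_base.ne' two_pos

lemma pythagGap_threshold_half : pythagGap threshold (1 / 2) (1 / 2) = 0 := by
  have hsqrt : √((1 / 2) ^ 2 + (1 / 2) ^ 2 : ℝ) = √2 / 2 := by
    rw [Real.sqrt_eq_iff_eq_sq (by norm_num) (by positivity)]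
    linear_combination (-1 / 4 : ℝ) * Real.sq_sqrt zero_le_two
  have hdiag : √2 / 2 / (√2 / 2 + 1) = 3 * (√2 - 1) / 3 := by
    have := Real.sq_sqrt (zero_le_two : (0 : ℝ) ≤ 2)
    field_simp
    nlinarith
  rw [pythagGap, fracPow, fracPow, hsqrt, hdiag, Real.div_rpow (by linarith [one_lt_threshold_base])
    (by norm_num), threshold_base_rpow, show (1 / 2 : ℝ) / (1 / 2 + 1) = 1 / 3 by norm_num,
    Real.div_rpow zero_le_one (by norm_num), Real.one_rpow]
  ring

lemma fracPow_div_le_fracPow_mul_div {p x s l : ℝ} (hp : 0 ≤ p) (hx : 0 ≤ x) (hxs : x ≤ s)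
    (hs : 0 < s) (hl : 1 ≤ l) :
    fracPow p x / fracPow p s ≤ fracPow p (l * x) / fracPow p (l * s) := by
  have hls : 0 < l * s := by nlinarith
  have hratio : x / (x + 1) / (s / (s + 1)) ≤ l * x / (l * x + 1) / (l * s / (l * s + 1)) := by
    rw [div_div_div_eq, div_div_div_eq, div_le_div_iff₀ (by positivity) (by positivity)]
    have := mul_nonneg (mul_nonneg hx hs.le) (mul_nonneg (sub_nonneg.mpr hl) (sub_nonneg.mpr hxs))
    nlinarith
  rw [fracPow, fracPow, fracPow, fracPow, ← Real.div_rpow (by positivity) (by positivity),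
    ← Real.div_rpow (by positivity) (by positivity)]
  exact Real.rpow_le_rpow (by positivity) hratio hp

lemma fracPow_threshold_add_half_le {y : ℝ} (hy : y ∈ Icc 0 (1 / 2)) :
    fracPow threshold y + fracPow threshold (1 / 2) ≤ fracPow threshold √(y ^ 2 + (1 / 2) ^ 2) := by
  have hz : (threshold - 2) / 3 ≤ 1 / 2 := by linarith [threshold_le]
  have := min_le_pythagGap two_lt_threshold hz hy
  rw [pythagGap_threshold_half, min_self, pythagGap] at this
  linarith

lemma fracPow_threshold_add_le {x y : ℝ} (hx : 0 ≤ x) (hxy : x ≤ y) (hy : y ≤ 1 / 2) :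
    fracPow threshold x + fracPow threshold y ≤ fracPow threshold √(x ^ 2 + y ^ 2) := by
  have hc := two_lt_threshold
  rcases (hx.trans hxy).eq_or_lt with rfl | hy0
  · obtain rfl : x = 0 := le_antisymm hxy hx
    simp [fracPow_zero (by linarith : threshold ≠ 0)]
  set s := √(x ^ 2 + y ^ 2)
  have hys : y ≤ s := Real.le_sqrt_of_sq_le (by nlinarith)
  have hxs : x ≤ s := hxy.trans hys
  have hs : 0 < s := hy0.trans_le hys
  set l := 1 / (2 * y) with hl_def
  have hl : 1 ≤ l := by rw [le_div_iff₀ (by positivity)]; linarith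
  have hly : l * y = 1 / 2 := by rw [hl_def]; field_simp
  have hls : l * s = √((l * x) ^ 2 + (1 / 2) ^ 2) := by
    have hs2 : s ^ 2 = x ^ 2 + y ^ 2 := Real.sq_sqrt (by positivity)
    rw [eq_comm, Real.sqrt_eq_iff_eq_sq (by positivity) (by positivity), ← hly]
    linear_combination (-l ^ 2) * hs2
  have hscaled := fracPow_threshold_add_half_le (y := l * x)
    ⟨by positivity, hly ▸ mul_le_mul_of_nonneg_left hxy (by positivity)⟩
  rw [← hls] at hscaled
  have hFs : 0 < fracPow threshold s := Real.rpow_pos_of_pos (by positivity) _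
  have hFls : 0 < fracPow threshold (l * s) := Real.rpow_pos_of_pos (by positivity) _
  have hxratio := fracPow_div_le_fracPow_mul_div (p := threshold) (by linarith) hx hxs hs hl
  have hyratio := fracPow_div_le_fracPow_mul_div (p := threshold) (by linarith) hy0.le hys hs hl
  rw [hly] at hyratio
  rw [← div_le_one hFs, add_div]
  calc _ ≤ fracPow threshold (l * x) / fracPow threshold (l * s)
        + fracPow threshold (1 / 2) / fracPow threshold (l * s) := add_le_add hxratio hyratio
    _ ≤ 1 := by rw [← add_div, div_le_one hFls]; exact hscaled

end RatioNegativity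

theorem stmt_10 (α : ℝ) (hα : α ≥ Real.logb (3 * (Real.sqrt 2 - 1)) 2) :
    ∀ x y : ℝ, 0 ≤ x → x ≤ 1 / 2 → 0 ≤ y → y ≤ 1 / 2 →
      (x / (x + 1)) ^ α + (y / (y + 1)) ^ α ≤
        (Real.sqrt (x ^ 2 + y ^ 2) / (Real.sqrt (x ^ 2 + y ^ 2) + 1)) ^ α := by
  intro x y hx hx' hy hy'
  wlog hxy : x ≤ y generalizing x y
  · have := this y x hy hy' hx hx' (le_of_not_ge hxy)
    rwa [add_comm, add_comm (y ^ 2)] at this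
  have hα' : RatioNegativity.threshold ≤ α := hα
  exact rpow_add_rpow_le_rpow_of_le (by positivity) (by positivity) (by positivity)
    (by linarith [RatioNegativity.two_lt_threshold]) hα'
    (RatioNegativity.fracPow_threshold_add_le hx hxy hy')
end

section
/- Let m be a natural number, let x₁, …, x_m be real numbers with 0 ≤ x_n ≤ 1/2 for each n and ∑_{n=1}^m x_n² ≤ 1/4, and let α ≥ log_{3(√2−1)} 2, where log_b x denotes the base-b logarithm (ln x)/(ln b). Then, writing s = √(∑_{n=1}^m x_n²), one has ∑_{n=1}^m (x_n/(x_n+1))^α ≤ (s/(s+1))^α. -/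
theorem stmt_11 (m : ℕ) (x : Fin m → ℝ)
    (hx : ∀ n, 0 ≤ x n ∧ x n ≤ 1 / 2)
    (hsum : ∑ n, (x n) ^ 2 ≤ 1 / 4)
    (α : ℝ) (hα : α ≥ Real.logb (3 * (Real.sqrt 2 - 1)) 2) :
    ∑ n, (x n / (x n + 1)) ^ α ≤
      (Real.sqrt (∑ n, (x n) ^ 2) / (Real.sqrt (∑ n, (x n) ^ 2) + 1)) ^ α := by
  have hS0 : 0 ≤ ∑ n, (x n) ^ 2 := Finset.sum_nonneg fun n _ => sq_nonneg _
  set s := Real.sqrt (∑ n, (x n) ^ 2) with hs_def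
  have hs0 : 0 ≤ s := Real.sqrt_nonneg _
  have hs2 : s ^ 2 = ∑ n, (x n) ^ 2 := Real.sq_sqrt hS0
  have hs_half : s ≤ 1 / 2 := by
    have h : s ^ 2 ≤ 1/4 := by rw [hs2]; exact hsum
    nlinarith
  have hs1 : (0:ℝ) < s + 1 := by linarith
  -- α ≥ 3
  have hsqrt2 : (Real.sqrt 2) ^ 2 = 2 := Real.sq_sqrt (by norm_num)
  have hsqrt2n : 0 ≤ Real.sqrt 2 := Real.sqrt_nonneg 2
  have hb1 : (1:ℝ) < 3 * (Real.sqrt 2 - 1) := by nlinarith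
  have hα3 : (3:ℝ) ≤ α := by
    refine le_trans ?_ hα
    have hlb : 0 < Real.log (3 * (Real.sqrt 2 - 1)) := Real.log_pos hb1
    rw [Real.logb, le_div_iff₀ hlb]
    have hcube : (3 * (Real.sqrt 2 - 1)) ^ (3:ℕ) ≤ 2 := by nlinarith
    have := Real.log_le_log (by positivity) hcube
    rw [Real.log_pow] at this
    push_cast at this
    linarith
  -- each x n ≤ s
  have hxs : ∀ n, x n ≤ s := by
    intro n
    have h1 : (x n) ^ 2 ≤ s ^ 2 := by
      rw [hs2]
      exact Finset.single_le_sum (fun i _ => sq_nonneg (x i)) (Finset.mem_univ n)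
    nlinarith [(hx n).1]
  have hr0 : ∀ n, 0 ≤ x n / (x n + 1) := fun n => div_nonneg (hx n).1 (by linarith [(hx n).1] : (0:ℝ) ≤ x n + 1)
  have hR0 : 0 ≤ s / (s + 1) := div_nonneg hs0 hs1.le
  have hx1 : ∀ n, (0:ℝ) < x n + 1 := fun n => by linarith [(hx n).1]
  -- ratio monotonicity
  have hratio : ∀ n, x n / (x n + 1) ^ 3 ≤ s / (s + 1) ^ 3 := by
    intro n
    rw [div_le_div_iff₀ (pow_pos (hx1 n) 3) (pow_pos hs1 3)]
    have h1 : s * x n ≤ 1/4 := by nlinarith [(hx n).1, (hx n).2, hs0, hs_half]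
    have h2 : s * x n * (s + x n + 3) ≤ 1 := by
      nlinarith [h1, mul_nonneg hs0 (hx n).1, (hx n).1, hs0, hs_half, (hx n).2]
    nlinarith [mul_nonneg (sub_nonneg.2 (hxs n)) (sub_nonneg.2 h2)]
  -- cube bound
  have hcube : ∑ n, (x n / (x n + 1)) ^ (3:ℕ) ≤ (s / (s + 1)) ^ (3:ℕ) := by
    calc ∑ n, (x n / (x n + 1)) ^ (3:ℕ)
        ≤ ∑ n, (x n) ^ 2 * (s / (s + 1) ^ 3) := by
          refine Finset.sum_le_sum fun n _ => ?_
          have he : (x n / (x n + 1)) ^ (3:ℕ) = (x n) ^ 2 * (x n / (x n + 1) ^ 3) := by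
            field_simp
          rw [he]
          exact mul_le_mul_of_nonneg_left (hratio n) (sq_nonneg _)
      _ = (∑ n, (x n) ^ 2) * (s / (s + 1) ^ 3) := by rw [← Finset.sum_mul]
      _ = (s / (s + 1)) ^ (3:ℕ) := by rw [← hs2]; field_simp
  -- lift to α
  have hRr : ∀ n, x n / (x n + 1) ≤ s / (s + 1) := by
    intro n
    rw [div_le_div_iff₀ (hx1 n) hs1]
    nlinarith [hxs n]
  have hterm : ∀ n, (x n / (x n + 1)) ^ α ≤ (x n / (x n + 1)) ^ (3:ℕ) * (s / (s + 1)) ^ (α - 3) := by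
    intro n
    have h0 := hr0 n
    have e1 : (x n / (x n + 1)) ^ α = (x n / (x n + 1)) ^ (((3:ℕ):ℝ) + (α - 3)) := by norm_num
    rw [e1, Real.rpow_add_of_nonneg h0 (by positivity) (by linarith), Real.rpow_natCast]
    exact mul_le_mul_of_nonneg_left (Real.rpow_le_rpow h0 (hRr n) (by linarith)) (pow_nonneg h0 3)
  calc ∑ n, (x n / (x n + 1)) ^ α
      ≤ ∑ n, (x n / (x n + 1)) ^ (3:ℕ) * (s / (s + 1)) ^ (α - 3) :=
        Finset.sum_le_sum fun n _ => hterm n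
    _ = (∑ n, (x n / (x n + 1)) ^ (3:ℕ)) * (s / (s + 1)) ^ (α - 3) := by rw [← Finset.sum_mul]
    _ ≤ (s / (s + 1)) ^ (3:ℕ) * (s / (s + 1)) ^ (α - 3) :=
        mul_le_mul_of_nonneg_right hcube (Real.rpow_nonneg hR0 _)
    _ = (s / (s + 1)) ^ α := by
        rw [← Real.rpow_natCast (s / (s+1)) 3, ← Real.rpow_add_of_nonneg hR0 (by positivity) (by linarith)]
        norm_num
end
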